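/- Let k ≥ 3 be an odd integer. Every k-quasi-transitive digraph D has a (k+2)-kernel, i.e., a set S of vertices such that d(u,v) ≥ k+2 for all distinct u,v ∈ S, and for every vertex u ∉ S there exists v ∈ S with d(u,v) ≤ k+1. -/

import Mathlib

/-!
Let `u = g 0 → ⋯ → g n = v` be a shortest path with `n ≥ k + 2`. Quasi-transitivity
applied to `k`-arc windows of it gives the backward arcs `g j → g (j - k)`, and then chords
`g n → g m` descending in steps of two from `m = n - k`. They end in `g n → g 0` or in
`g n → g 1`, and in the latter case `g n → g k → g 0`: so `d(u, v) ≥ k + 2` forces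
`d(v, u) ≤ 2`. A similar window argument shows that a vertex `s` of a strong component
maximising the number of vertices within distance `k + 1` of it is reached within `k + 1`
by the whole component. Choosing one such `s` in every terminal strong component gives the
kernel: distinct choices are mutually unreachable, and a vertex `u` at distance `≥ k + 2`
from the chosen vertex of a terminal component it reaches would be reached back from it,
hence lie in that component.
-/

variable {V : Type*}

/-- A directed path of length `n` from `u` to `v` in the digraph with arc relation `A`:
a sequence of `n + 1` pairwise distinct vertices, consecutive ones joined by arcs. -/
def HasPathN (A : V → V → Prop) (u v : V) (n : ℕ) : Prop :=
  ∃ f : Fin (n + 1) → V, Function.Injective f ∧ f 0 = u ∧ f (Fin.last n) = v ∧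
    ∀ i : Fin n, A (f i.castSucc) (f i.succ)

/-- The distance from `u` to `v`: the length of a shortest directed path from `u` to `v`,
`⊤` if there is no such path. -/
noncomputable def ddist (A : V → V → Prop) (u v : V) : ℕ∞ :=
  sInf {n : ℕ∞ | ∃ m : ℕ, n = (m : ℕ∞) ∧ HasPathN A u v m}

/-- `D` is `k`-quasi-transitive if for every directed path `(v_0, …, v_k)` of length `k`,
either `(v_0, v_k)` or `(v_k, v_0)` is an arc. -/
def KQuasiTrans (A : V → V → Prop) (k : ℕ) : Prop :=
  ∀ u v : V, HasPathN A u v k → A u v ∨ A v u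

/-- A vertex `v` is an `r`-king if every vertex is within distance `r` from `v`. -/
def IsRKing (A : V → V → Prop) (r : ℕ) (v : V) : Prop :=
  ∀ u : V, ddist A v u ≤ (r : ℕ∞)

/-- `u` reaches `v` by a directed path. -/
def Reaches (A : V → V → Prop) (u v : V) : Prop :=
  ∃ n : ℕ, HasPathN A u v n

/-- A strong component: the set of all vertices mutually reachable with some vertex. -/
def IsStrongComponent (A : V → V → Prop) (S : Set V) : Prop :=
  ∃ v : V, S = {u | Reaches A u v ∧ Reaches A v u}

/-- An initial strong component: a strong component receiving no arcs from outside. -/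
def IsInitialStrongComponent (A : V → V → Prop) (S : Set V) : Prop :=
  IsStrongComponent A S ∧ ∀ u v : V, u ∉ S → v ∈ S → ¬ A u v

/-- The out-degree of `v` in `D`. -/
noncomputable def outDeg (A : V → V → Prop) (v : V) : ℕ :=
  {u : V | A v u}.ncard

/-- The out-degree of `v` in the subdigraph of `D` induced by `C`. -/
noncomputable def outDegIn (A : V → V → Prop) (C : Set V) (v : V) : ℕ :=
  {u ∈ C | A v u}.ncard

/-- The maximum out-degree of the subdigraph induced by `C`. -/
noncomputable def maxOutDegIn (A : V → V → Prop) (C : Set V) : ℕ :=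
  sSup (outDegIn A C '' C)

open Set

section Walks

variable {A : V → V → Prop} {g : ℕ → V} {u v w : V} {m n : ℕ}

def IsWalk (A : V → V → Prop) (g : ℕ → V) (n : ℕ) : Prop :=
  ∀ i < n, A (g i) (g (i + 1))

lemma IsWalk.mono (hg : IsWalk A g n) (hmn : m ≤ n) : IsWalk A g m :=
  fun i hi => hg i (by omega)

lemma IsWalk.shift (hg : IsWalk A g n) (i : ℕ) : IsWalk A (fun t => g (i + t)) (n - i) :=
  fun t ht => by simpa only [Nat.add_succ] using hg (i + t) (by omega)

lemma hasPathN_iff : HasPathN A u v n ↔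
    ∃ g : ℕ → V, IsWalk A g n ∧ InjOn g (Iic n) ∧ g 0 = u ∧ g n = v := by
  constructor
  · rintro ⟨f, hinj, h0, hn, harc⟩
    refine ⟨fun i => f (Fin.clamp i n), fun i hi => ?_, fun i hi j hj hij => ?_, ?_, ?_⟩
    · convert harc ⟨i, hi⟩ using 2 <;> ext <;> simp [Nat.succ_le_of_lt hi, hi.le]
    · have := congrArg Fin.val (hinj hij)
      simp only [Fin.clamp] at this
      simp only [mem_Iic] at hi hj
      omega
    · simpa [Fin.clamp] using h0
    · simpa [Fin.clamp, Fin.last] using hn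
  · rintro ⟨g, hwalk, hinj, h0, hn⟩
    refine ⟨fun i => g i, fun i j hij => Fin.ext (hinj ?_ ?_ hij), h0, hn, fun i => hwalk i i.2⟩
    · exact Nat.lt_succ_iff.mp i.2
    · exact Nat.lt_succ_iff.mp j.2

lemma ddist_le_of_hasPathN (h : HasPathN A u v n) : ddist A u v ≤ n :=
  sInf_le ⟨n, rfl, h⟩

lemma exists_hasPathN_of_ddist_ne_top (h : ddist A u v ≠ ⊤) :
    ∃ n : ℕ, ddist A u v = n ∧ HasPathN A u v n := by
  have hne : {d : ℕ∞ | ∃ m : ℕ, d = m ∧ HasPathN A u v m}.Nonempty := by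
    by_contra hempty
    exact h (by rw [ddist, not_nonempty_iff_eq_empty.mp hempty, sInf_empty])
  obtain ⟨n, hn, hpath⟩ := csInf_mem hne
  exact ⟨n, hn, hpath⟩

lemma reaches_iff_ddist_ne_top : Reaches A u v ↔ ddist A u v ≠ ⊤ :=
  ⟨fun ⟨_, h⟩ => ne_top_of_le_ne_top (ENat.natCast_ne_top _) (ddist_le_of_hasPathN h),
    fun h => (exists_hasPathN_of_ddist_ne_top h).imp fun _ => And.right⟩

lemma ddist_self (u : V) : ddist A u u = 0 := by
  refine nonpos_iff_eq_zero.mp (ddist_le_of_hasPathN (n := 0) (hasPathN_iff.mpr ?_))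
  exact ⟨fun _ => u, fun i hi => by omega, fun _ _ _ _ _ => by simp_all, rfl, rfl⟩

/-- A shortest path to `v` either already visits `w`, or extends by the arc `v → w`. -/
lemma ddist_le_add_one_of_arc (u : V) (hvw : A v w) : ddist A u w ≤ ddist A u v + 1 := by
  by_cases htop : ddist A u v = ⊤
  · simp [htop]
  obtain ⟨n, hn, hpath⟩ := exists_hasPathN_of_ddist_ne_top htop
  obtain ⟨g, hwalk, hinj, h0, hgn⟩ := hasPathN_iff.mp hpath
  rw [hn]
  by_cases hvisit : ∃ i ≤ n, g i = w
  · obtain ⟨i, hin, rfl⟩ := hvisit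
    have hpath' : HasPathN A u (g i) i := hasPathN_iff.mpr
      ⟨g, hwalk.mono hin, hinj.mono (Iic_subset_Iic.mpr hin), h0, rfl⟩
    calc ddist A u (g i) ≤ i := ddist_le_of_hasPathN hpath'
      _ ≤ n + 1 := by exact_mod_cast hin.trans n.le_succ
  · push Not at hvisit
    have hpath' : HasPathN A u w (n + 1) := by
      refine hasPathN_iff.mpr ⟨fun t => if t ≤ n then g t else w, fun i hi => ?_,
        fun i hi j hj hij => ?_, by simpa, by simp⟩
      · rcases Nat.lt_or_ge i n with hin | hin
        · simpa [hin.le, Nat.succ_le_of_lt hin] using hwalk i hin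
        · simpa [show i = n by omega, hgn] using hvw
      · simp only [mem_Iic] at hi hj
        dsimp only at hij
        split_ifs at hij with hi' hj' hj'
        · exact hinj hi' hj' hij
        · exact absurd hij (hvisit i hi')
        · exact absurd hij.symm (hvisit j hj')
        · omega
    exact_mod_cast ddist_le_of_hasPathN hpath'

lemma ddist_le_add_of_isWalk (u : V) (hg : IsWalk A g n) :
    ddist A u (g n) ≤ ddist A u (g 0) + n := by
  induction n with
  | zero => simp
  | succ n ih =>
    calc ddist A u (g (n + 1)) ≤ ddist A u (g n) + 1 :=
          ddist_le_add_one_of_arc u (hg n n.lt_succ_self)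
      _ ≤ ddist A u (g 0) + n + 1 := by gcongr; exact ih (hg.mono n.le_succ)
      _ = ddist A u (g 0) + (n + 1 : ℕ) := by push_cast; rw [add_assoc]

lemma ddist_le_of_isWalk (hg : IsWalk A g n) : ddist A (g 0) (g n) ≤ n := by
  simpa [ddist_self] using ddist_le_add_of_isWalk (g 0) hg

lemma IsWalk.ddist_le {i j : ℕ} (hg : IsWalk A g n) (hij : i ≤ j) (hjn : j ≤ n) :
    ddist A (g i) (g j) ≤ (j - i : ℕ) := by
  simpa [Nat.add_sub_cancel' hij] using ddist_le_of_isWalk ((hg.mono hjn).shift i)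

lemma ddist_le_one_of_arc (huv : A u v) : ddist A u v ≤ 1 := by
  simpa [ddist_self] using ddist_le_add_one_of_arc u huv

lemma ddist_triangle (u v w : V) : ddist A u w ≤ ddist A u v + ddist A v w := by
  by_cases htop : ddist A v w = ⊤
  · simp [htop]
  obtain ⟨n, hn, hpath⟩ := exists_hasPathN_of_ddist_ne_top htop
  obtain ⟨g, hwalk, -, rfl, rfl⟩ := hasPathN_iff.mp hpath
  simpa [hn] using ddist_le_add_of_isWalk u hwalk

lemma Reaches.refl (v : V) : Reaches A v v :=
  reaches_iff_ddist_ne_top.mpr (by simp [ddist_self])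

lemma Reaches.trans (huv : Reaches A u v) (hvw : Reaches A v w) : Reaches A u w := by
  rw [reaches_iff_ddist_ne_top] at *
  exact ne_top_of_le_ne_top (WithTop.add_ne_top.mpr ⟨huv, hvw⟩) (ddist_triangle u v w)

end Walks

section Geodesics

variable {A : V → V → Prop} {g : ℕ → V} {u v : V} {k n : ℕ}

def IsGeodesic (A : V → V → Prop) (g : ℕ → V) (n : ℕ) : Prop :=
  IsWalk A g n ∧ ddist A (g 0) (g n) = n

lemma exists_isGeodesic (h : ddist A u v = n) :
    ∃ g, IsGeodesic A g n ∧ g 0 = u ∧ g n = v := by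
  obtain ⟨m, hm, hpath⟩ := exists_hasPathN_of_ddist_ne_top (h ▸ ENat.natCast_ne_top n)
  obtain rfl : m = n := by exact_mod_cast hm.symm.trans h
  obtain ⟨g, hwalk, -, rfl, rfl⟩ := hasPathN_iff.mp hpath
  exact ⟨g, ⟨hwalk, h⟩, rfl, rfl⟩

lemma IsGeodesic.ddist_eq (hg : IsGeodesic A g n) {i j : ℕ} (hij : i ≤ j) (hjn : j ≤ n) :
    ddist A (g i) (g j) = (j - i : ℕ) := by
  have hle := hg.1.ddist_le hij hjn
  refine le_antisymm hle ?_
  have hlower := calc (n : ℕ∞) = ddist A (g 0) (g n) := hg.2.symm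
    _ ≤ ddist A (g 0) (g i) + ddist A (g i) (g j) + ddist A (g j) (g n) :=
      (ddist_triangle _ (g j) _).trans (by gcongr; exact ddist_triangle _ _ _)
    _ ≤ (i - 0 : ℕ) + ddist A (g i) (g j) + (n - j : ℕ) := by
      gcongr
      · exact hg.1.ddist_le (Nat.zero_le i) (hij.trans hjn)
      · exact hg.1.ddist_le hjn le_rfl
  obtain ⟨e, he, -⟩ := ENat.le_natCast_iff.mp hle
  rw [he] at hlower ⊢
  norm_cast at hlower ⊢
  omega

lemma IsGeodesic.injOn (hg : IsGeodesic A g n) : InjOn g (Iic n) := by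
  intro i hi j hj hij
  wlog hle : i ≤ j generalizing i j
  · exact (this hj hi hij.symm (by omega)).symm
  have := hg.ddist_eq hle hj
  rw [hij, ddist_self] at this
  norm_cast at this
  omega

lemma IsGeodesic.not_arc (hg : IsGeodesic A g n) {p q : ℕ} (hpq : p + 2 ≤ q) (hqn : q ≤ n) :
    ¬ A (g p) (g q) := by
  intro h
  have := ddist_le_one_of_arc h
  rw [hg.ddist_eq (by omega) hqn] at this
  norm_cast at this
  omega

lemma KQuasiTrans.arc_or_arc (hqt : KQuasiTrans A k) (hg : IsWalk A g k)
    (hinj : InjOn g (Iic k)) :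
    A (g 0) (g k) ∨ A (g k) (g 0) :=
  hqt _ _ (hasPathN_iff.mpr ⟨g, hg, hinj, rfl, rfl⟩)

lemma IsGeodesic.arc_or_arc_of_window (hqt : KQuasiTrans A k) (hg : IsGeodesic A g n)
    {idx : ℕ → ℕ} (hmaps : ∀ t ≤ k, idx t ≤ n) (hinj : InjOn idx (Iic k))
    (harc : ∀ t < k, A (g (idx t)) (g (idx (t + 1)))) :
    A (g (idx 0)) (g (idx k)) ∨ A (g (idx k)) (g (idx 0)) :=
  hqt.arc_or_arc (g := g ∘ idx) harc (hg.injOn.comp hinj fun t ht => hmaps t ht)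

lemma IsGeodesic.arc_sub (hqt : KQuasiTrans A k) (hk : 2 ≤ k) (hg : IsGeodesic A g n)
    {j : ℕ} (hkj : k ≤ j) (hjn : j ≤ n) : A (g j) (g (j - k)) := by
  have h := hg.arc_or_arc_of_window hqt (idx := fun t => j - k + t) (fun t ht => by omega)
    (fun a _ b _ hab => by simpa using hab)
    (fun t ht => by simpa only [← add_assoc] using hg.1 (j - k + t) (by omega))
  simp only [add_zero, Nat.sub_add_cancel hkj] at h
  exact h.resolve_left (hg.not_arc (by omega) hjn)

lemma IsGeodesic.arc_last_sub_two (hqt : KQuasiTrans A k) (hk : 2 ≤ k) (hg : IsGeodesic A g n)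
    {m : ℕ} (hm : 2 ≤ m) (hmn : m + k ≤ n) (h : A (g n) (g m)) : A (g n) (g (m - 2)) := by
  -- the window `g n → g m → ⋯ → g (max m k) → g (max m k - k) → ⋯ → g (m - 2)`,
  -- where `max m k = m + (k - m)`
  have hwin := hg.arc_or_arc_of_window hqt
    (idx := fun t => if t = 0 then n else if t ≤ k - m + 1 then m + t - 1 else m + t - 2 - k)
    (fun t ht => by split_ifs <;> omega)
    (fun a ha b hb hab => by
      simp only [mem_Iic] at ha hb; dsimp only at hab; split_ifs at hab <;> omega)
    (fun t ht => by
      rcases Nat.lt_trichotomy t (k - m + 1) with hlt | heq | hgt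
      · rcases t with _ | t
        · simpa [show m + 1 - 1 = m by omega, show 1 ≤ k - m + 1 by omega] using h
        · simpa [show t + 1 ≤ k - m + 1 by omega, show t + 1 + 1 ≤ k - m + 1 by omega,
            show m + (t + 1 + 1) - 1 = m + (t + 1) - 1 + 1 by omega]
            using hg.1 (m + (t + 1) - 1) (by omega)
      · subst heq
        simpa [show m + (k - m + 1) - 1 = m + (k - m) by omega,
          show m + (k - m + 1 + 1) - 2 - k = m + (k - m) - k by omega]
          using hg.arc_sub hqt hk (j := m + (k - m)) (by omega) (by omega)
      · simpa [show t ≠ 0 by omega, show ¬ t ≤ k - m + 1 by omega,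
          show ¬ t + 1 ≤ k - m + 1 by omega,
          show m + (t + 1) - 2 - k = m + t - 2 - k + 1 by omega]
          using hg.1 (m + t - 2 - k) (by omega))
  simp only [show k ≠ 0 by omega, show ¬ k ≤ k - m + 1 by omega, if_true, if_false,
    show m + k - 2 - k = m - 2 by omega] at hwin
  exact hwin.resolve_right (hg.not_arc (by omega) le_rfl)

lemma IsGeodesic.arc_last_of_even (hqt : KQuasiTrans A k) (hk : 2 ≤ k) (hg : IsGeodesic A g n)
    (hkn : k ≤ n) (d m : ℕ) (hd : m + 2 * d = n - k) : A (g n) (g m) := by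
  induction d generalizing m with
  | zero => simpa [show m = n - k by omega] using hg.arc_sub hqt hk hkn le_rfl
  | succ d ih =>
    simpa using
      hg.arc_last_sub_two hqt hk (m := m + 2) (by omega) (by omega) (ih (m + 2) (by omega))

lemma IsGeodesic.ddist_le_two (hqt : KQuasiTrans A k) (hk : 2 ≤ k) (hg : IsGeodesic A g n)
    (hkn : k + 2 ≤ n) : ddist A (g n) (g 0) ≤ 2 := by
  obtain ⟨d, hd | hd⟩ := Nat.even_or_odd' (n - k)
  · exact (ddist_le_one_of_arc (hg.arc_last_of_even hqt hk (by omega) d 0 (by omega))).trans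
      one_le_two
  have h1 := hg.arc_last_of_even hqt hk (by omega) d 1 (by omega)
  have hwin := hg.arc_or_arc_of_window hqt (idx := fun t => if t = 0 then n else t)
    (fun t ht => by split_ifs <;> omega)
    (fun a ha b hb hab => by
      simp only [mem_Iic] at ha hb; dsimp only at hab; split_ifs at hab <;> omega)
    (fun t ht => by
      rcases t with _ | t
      · simpa using h1
      · simpa using hg.1 (t + 1) (by omega))
  simp only [show k ≠ 0 by omega, if_true, if_false] at hwin
  have hnk := hwin.resolve_right (hg.not_arc (by omega) le_rfl)
  have hk0 := hg.arc_sub hqt hk le_rfl (by omega)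
  rw [Nat.sub_self] at hk0
  calc ddist A (g n) (g 0) ≤ ddist A (g n) (g k) + ddist A (g k) (g 0) := ddist_triangle _ _ _
    _ ≤ 1 + 1 := add_le_add (ddist_le_one_of_arc hnk) (ddist_le_one_of_arc hk0)
    _ = 2 := one_add_one_eq_two

end Geodesics

section Concat

variable {A : V → V → Prop} {Q R : ℕ → V} {a b : ℕ}

def concatWalk (Q : ℕ → V) (a : ℕ) (R : ℕ → V) : ℕ → V :=
  fun t => if t ≤ a then Q t else R (t - a)

lemma concatWalk_of_le {t : ℕ} (ht : t ≤ a) : concatWalk Q a R t = Q t := if_pos ht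

lemma concatWalk_of_ge (hQR : Q a = R 0) {t : ℕ} (ht : a ≤ t) :
    concatWalk Q a R t = R (t - a) := by
  rcases ht.eq_or_lt with rfl | ht
  · simp [concatWalk, hQR]
  · exact if_neg (by omega)

lemma IsWalk.concat (hQ : IsWalk A Q a) (hR : IsWalk A R b) (hQR : Q a = R 0) :
    IsWalk A (concatWalk Q a R) (a + b) := by
  intro t ht
  rcases Nat.lt_or_ge t a with hta | hta
  · rw [concatWalk_of_le hta.le, concatWalk_of_le hta]
    exact hQ t hta
  · rw [concatWalk_of_ge hQR hta, concatWalk_of_ge hQR (by omega),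
      show t + 1 - a = t - a + 1 by omega]
    exact hR (t - a) (by omega)

lemma IsWalk.ddist_le_of_eq {g : ℕ → V} {n x y : ℕ} (hg : IsWalk A g n) (hxy : x ≤ y)
    (hyn : y ≤ n) (he : g x = g y) : ddist A (g 0) (g n) ≤ (x + (n - y) : ℕ) :=
  calc ddist A (g 0) (g n) ≤ ddist A (g 0) (g x) + ddist A (g y) (g n) :=
        he ▸ ddist_triangle _ _ _
    _ ≤ (x - 0 : ℕ) + (n - y : ℕ) :=
        add_le_add (hg.ddist_le (Nat.zero_le x) (hxy.trans hyn)) (hg.ddist_le hyn le_rfl)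
    _ = (x + (n - y) : ℕ) := by push_cast; rfl

/-- A shortcut of length `≥ 2` would beat the distance; a shortcut of length one stays inside
`Q` or inside `R`. -/
lemma IsGeodesic.injOn_concat (hQ : IsGeodesic A Q a) (hR : IsGeodesic A R b) (hQR : Q a = R 0)
    (hfar : ((a + b : ℕ) : ℕ∞) ≤ ddist A (Q 0) (R b) + 1) :
    InjOn (concatWalk Q a R) (Iic (a + b)) := by
  intro x hx y hy hxy
  simp only [mem_Iic] at hx hy
  wlog hle : x ≤ y generalizing x y
  · exact (this hxy.symm hy hx (by omega)).symm
  have hshort := (hQ.1.concat hR.1 hQR).ddist_le_of_eq hle hy hxy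
  rw [concatWalk_of_le (Nat.zero_le a), concatWalk_of_ge hQR (by omega), Nat.add_sub_cancel_left]
    at hshort
  obtain ⟨e, he, -⟩ := ENat.le_natCast_iff.mp hshort
  rw [he] at hshort hfar
  norm_cast at hshort hfar
  rcases Nat.lt_or_ge a y with hay | hya
  · have := hR.injOn (by simp; omega) (by simp; omega)
      ((concatWalk_of_ge hQR (by omega)).symm.trans (hxy.trans (concatWalk_of_ge hQR hay.le)))
    omega
  · exact hQ.injOn (by simp; omega) (by simpa using hya)
      ((concatWalk_of_le (by omega)).symm.trans (hxy.trans (concatWalk_of_le hya)))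

end Concat

namespace KQuasiTrans

variable {A : V → V → Prop} {k : ℕ} {u v w z s : V}

lemma ddist_le_two (hqt : KQuasiTrans A k) (hk : 2 ≤ k) (huv : Reaches A u v)
    (hfar : ¬ ddist A u v ≤ (k + 1 : ℕ)) : ddist A v u ≤ 2 := by
  obtain ⟨n, hn, -⟩ := exists_hasPathN_of_ddist_ne_top (reaches_iff_ddist_ne_top.mp huv)
  obtain ⟨g, hg, rfl, rfl⟩ := exists_isGeodesic hn
  rw [hn] at hfar
  exact hg.ddist_le_two hqt hk (by norm_cast at hfar; omega)

/-- Quasi-transitivity along the last `k` arcs of a shortest `z`–`s` path followed by a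
shortest `s`–`w` path. -/
lemma ddist_le_of_far (hqt : KQuasiTrans A k) (hk : 3 ≤ k) (hzs : ddist A z s ≤ (k + 1 : ℕ))
    (hsw : ddist A s w ≤ 2) (hzw : ¬ ddist A z w ≤ (k + 1 : ℕ)) : ddist A w s ≤ k := by
  obtain ⟨a, ha, hak⟩ := ENat.le_natCast_iff.mp hzs
  obtain ⟨b, hb, hb2⟩ := (ENat.le_natCast_iff (k := 2)).mp hsw
  obtain ⟨Q, hQ, rfl, rfl⟩ := exists_isGeodesic ha
  obtain ⟨R, hR, hR0, rfl⟩ := exists_isGeodesic hb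
  have hab : k + 2 ≤ a + b := by
    have := ddist_triangle (A := A) (Q 0) (Q a) (R b)
    rw [ha, hb] at this
    by_contra! hlt
    exact hzw (this.trans (by norm_cast; omega))
  have hW := hQ.1.concat hR.1 hR0.symm
  have hinj := hQ.injOn_concat hR hR0.symm <| calc
    ((a + b : ℕ) : ℕ∞) ≤ ((k + 1 : ℕ) : ℕ∞) + 1 + 1 := by norm_cast; omega
    _ ≤ ddist A (Q 0) (R b) + 1 := by gcongr; exact Order.add_one_le_of_lt (not_le.mp hzw)
  obtain ⟨c, hc⟩ : ∃ c, c + k = a + b := ⟨a + b - k, by omega⟩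
  have hQc : concatWalk Q a R c = Q c := concatWalk_of_le (by omega)
  have hWend : concatWalk Q a R (c + k) = R b := by
    rw [concatWalk_of_ge hR0.symm (by omega)]; congr 1; omega
  have hwin := hqt.arc_or_arc (g := fun t => concatWalk Q a R (c + t))
    (by simpa [show a + b - c = k by omega] using hW.shift c)
    (hinj.comp (fun x hx y hy h => by simpa using h) fun t ht => by simp at ht ⊢; omega)
  simp only [add_zero, hQc, hWend] at hwin
  rcases hwin with hcw | hwc
  · refine absurd ?_ hzw
    calc ddist A (Q 0) (R b) ≤ ddist A (Q 0) (Q c) + ddist A (Q c) (R b) := ddist_triangle _ _ _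
      _ ≤ (c - 0 : ℕ) + 1 := add_le_add (hQ.1.ddist_le (Nat.zero_le c) (by omega))
          (ddist_le_one_of_arc hcw)
      _ ≤ (k + 1 : ℕ) := by norm_cast; omega
  · calc ddist A (R b) (Q a) ≤ ddist A (R b) (Q c) + ddist A (Q c) (Q a) := ddist_triangle _ _ _
      _ ≤ 1 + (a - c : ℕ) :=
          add_le_add (ddist_le_one_of_arc hwc) (hQ.1.ddist_le (by omega) le_rfl)
      _ ≤ k := by norm_cast; omega

/-- Take `s ∈ C` with the most vertices within distance `k + 1` of it; by `ddist_le_of_far`,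
a vertex `w ∈ C` farther from `s` would have strictly more. -/
lemma exists_absorbing [Finite V] (hqt : KQuasiTrans A k) (hk : 3 ≤ k) {C : Set V}
    (hC : C.Nonempty) (hstrong : ∀ x ∈ C, ∀ y ∈ C, Reaches A x y) :
    ∃ s ∈ C, ∀ u ∈ C, ddist A u s ≤ (k + 1 : ℕ) := by
  obtain ⟨s, hs, hmax⟩ :=
    C.exists_max_image (fun x => {u | ddist A u x ≤ (k + 1 : ℕ)}.ncard) C.toFinite hC
  refine ⟨s, hs, fun w hw => ?_⟩
  by_contra hws
  have hsw := hqt.ddist_le_two (by omega) (hstrong w hw s hs) hws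
  have hsub : {u | ddist A u s ≤ (k + 1 : ℕ)} ⊂ {u | ddist A u w ≤ (k + 1 : ℕ)} := by
    refine ssubset_of_subset_not_subset (fun u hus => ?_) fun hsub => hws (hsub ?_)
    · by_contra huw
      exact hws ((hqt.ddist_le_of_far hk hus hsw huw).trans (by norm_cast; omega))
    · simp [ddist_self]
  exact (Set.ncard_lt_ncard hsub).not_ge (hmax w hw)

end KQuasiTrans

section Terminal

variable {A : V → V → Prop} {u v : V}

def InTerminalComponent (A : V → V → Prop) (v : V) : Prop :=
  ∀ w, Reaches A v w → Reaches A w v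

lemma InTerminalComponent.reaches_eq (hv : InTerminalComponent A v) (hvu : Reaches A v u) :
    {w | Reaches A u w} = {w | Reaches A v w} :=
  Set.ext fun _ => ⟨hvu.trans, (hv u hvu).trans⟩

lemma exists_inTerminalComponent [Finite V] (u : V) :
    ∃ v, Reaches A u v ∧ InTerminalComponent A v := by
  obtain ⟨v, huv, hmin⟩ := Set.exists_min_image {x | Reaches A u x}
    (fun x => {y | Reaches A x y}.ncard) (Set.toFinite _) ⟨u, Reaches.refl u⟩
  refine ⟨v, huv, fun w hvw => by_contra fun hwv => ?_⟩
  have hsub : {y | Reaches A w y} ⊂ {y | Reaches A v y} :=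
    ssubset_of_subset_not_subset (fun _ => hvw.trans) fun h => hwv (h (Reaches.refl v))
  exact (Set.ncard_lt_ncard hsub).not_ge (hmin w (Reaches.trans huv hvw))

end Terminal

theorem kqt_odd_kernel_general
    [Fintype V] (A : V → V → Prop)
    (k : ℕ) (hk : 3 ≤ k) (hqt : KQuasiTrans A k) :
    ∃ S : Set V,
      (∀ u ∈ S, ∀ v ∈ S, u ≠ v → ((k : ℕ∞) + 2) ≤ ddist A u v) ∧
      (∀ u : V, u ∉ S → ∃ v ∈ S, ddist A u v ≤ ((k : ℕ∞) + 1)) := by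
  have hpick : ∀ C : Set V, (∃ v, InTerminalComponent A v ∧ C = {w | Reaches A v w}) →
      ∃ s ∈ C, ∀ u ∈ C, ddist A u s ≤ (k + 1 : ℕ) := by
    rintro C ⟨v, hv, rfl⟩
    exact hqt.exists_absorbing hk ⟨v, Reaches.refl v⟩ fun x hx y hy => (hv x hx).trans hy
  choose pick hpick_mem hpick_le using hpick
  refine ⟨{s | ∃ v, ∃ hv : InTerminalComponent A v, s = pick _ ⟨v, hv, rfl⟩}, ?_,
    fun u _ => ?_⟩
  · rintro _ ⟨v₁, hv₁, rfl⟩ _ ⟨v₂, hv₂, rfl⟩ hne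
    suffices hreach :
        ¬ Reaches A (pick _ ⟨v₁, hv₁, rfl⟩) (pick _ ⟨v₂, hv₂, rfl⟩) by
      rw [reaches_iff_ddist_ne_top, not_not] at hreach
      simp [hreach]
    intro hreach
    have h₁ : Reaches A v₁ _ := hpick_mem _ ⟨v₁, hv₁, rfl⟩
    have h₂ : Reaches A v₂ _ := hpick_mem _ ⟨v₂, hv₂, rfl⟩
    refine hne ?_
    congr 1
    rw [← hv₁.reaches_eq (h₁.trans hreach), hv₂.reaches_eq h₂]
  · obtain ⟨v, huv, hv⟩ := exists_inTerminalComponent (A := A) u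
    have hvs : Reaches A v _ := hpick_mem _ ⟨v, hv, rfl⟩
    refine ⟨_, ⟨v, hv, rfl⟩, ?_⟩
    suffices ddist A u (pick _ ⟨v, hv, rfl⟩) ≤ (k + 1 : ℕ) by exact_mod_cast this
    by_contra hfar
    have hsu := hqt.ddist_le_two (by omega) (huv.trans hvs) hfar
    exact hfar (hpick_le _ ⟨v, hv, rfl⟩ u (hvs.trans (reaches_iff_ddist_ne_top.mpr
      (ne_top_of_le_ne_top (by simp) hsu))))

/-- odd `k ≥ 3`; every `k`-quasi-transitive digraph has a `(k+2)`-kernel. -/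
theorem kqt_odd_kernel
    [Fintype V] (A : V → V → Prop) (hloop : ∀ v : V, ¬ A v v)
    (k : ℕ) (hk : 3 ≤ k) (hko : Odd k) (hqt : KQuasiTrans A k) :
    ∃ S : Set V,
      (∀ u ∈ S, ∀ v ∈ S, u ≠ v → ((k : ℕ∞) + 2) ≤ ddist A u v) ∧
      (∀ u : V, u ∉ S → ∃ v ∈ S, ddist A u v ≤ ((k : ℕ∞) + 1)) :=
  kqt_odd_kernel_general A k hk hqt
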